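/- arXiv:2506.19565 — 2 statements merged into one kernel-verified Lean document; each statement's English description precedes it below -/
import Mathlib

section
/- Fix positive integers N, n, p, m_1, …, m_N and T. Consider real matrices A (n×n), B^i (n×m_i), C (p×n), D^i (p×m_i), symmetric Q^i (p×p) with Q^i ⪰ 0, symmetric R^{ij} (m_j×m_j) with R^{ii} ≻ 0, scalars δ^i ∈ (0,1], and vectors l_t^i ∈ ℝ^p for i ∈ {1,…,N}, t ∈ {1,…,T}. Consider the coupled generalized discrete Riccati difference system in the unknowns K_t^i ∈ ℝ^{m_i×n}, L_t^i ∈ ℝ^{m_i}, P_t^i ∈ ℝ^{n×n}, S_t^i ∈ ℝ^n, w_t^i ∈ ℝ (for all i and all t ∈ {1,…,T}) with terminal conditions P^i_{T+1}=0, S^i_{T+1}=0, w^i_{T+1}=0: (i) δ^i (B^i)^⊤ P^i_{t+1} F_t + (D^i)^⊤ Q^i G_t + R^{ii} K^i_t = 0; (ii) δ^i (B^i)^⊤ (P^i_{t+1} I_t + S^i_{t+1}) + R^{ii} L^i_t + (D^i)^⊤ Q^i M^i_t = 0; (iii) P^i_t = G_t^⊤ Q^i G_t + δ^i F_t^⊤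 P^i_{t+1} F_t + Σ_{j=1}^N (K^j_t)^⊤ R^{ij} K^j_t; (iv) S^i_t = G_t^⊤ Q^i M^i_t + δ^i F_t^⊤ P^i_{t+1} I_t + δ^i F_t^⊤ S^i_{t+1} + Σ_{j=1}^N (K^j_t)^⊤ R^{ij} L^j_t; (v) w^i_t = ½ (M^i_t)^⊤ Q^i M^i_t + ½ δ^i I_t^⊤ P^i_{t+1} I_t + δ^i I_t^⊤ S^i_{t+1} + δ^i w^i_{t+1} + ½ Σ_{j=1}^N (L^j_t)^⊤ R^{ij} L^j_t, where F_t = A + Σ_j B^j K^j_t, G_t = C + Σ_j D^j K^j_t, I_t = Σ_j B^j L^j_t, M_t^i = Σ_j D^j L^j_t − l_t^i. Suppose the backward sequence P_{T+1}, P_T, …, P_2 obtained by setting P^i_{T+1}=0, solving K_t = H(P_{t+1})^{−1} g(P_{t+1}) (stacked as K_t = col(K_t^1,…,K_t^N)), and updating each P^i_t by (iii), is well defined, i.e. H(P_{t+1}) is invertible at every stage t ∈ {1,…,T}. Then the system (i)–(v) with the stated terminal conditions admits exactly one solution {K_t^i, L_t^i, P_t^i, S_t^i, w_t^i : 1 ≤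 i ≤ N, 1 ≤ t ≤ T}. -/
open Matrix BigOperators

/-!
Backward induction on the stage. Given `(P, S, w)` at stage `t + 1`, equations (i) of all players
stack to `H(P_{t+1}) K_t = g(P_{t+1})` and equations (ii) to a linear system for `L_t` with the
same matrix `H(P_{t+1})`. If `P_{t+1}` is the backward sequence of the hypothesis, `H(P_{t+1})` is
invertible, so `K_t` and `L_t` are uniquely determined; (iii)–(v) then define `(P, S, w)` at
stage `t` explicitly, and (iii) with `K_t = H⁻¹ g` is exactly the recursion defining the backward
sequence, which keeps the induction going.
-/

/-- Stacked coefficient matrix `H(P)`, whose (i,j) block is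
`(Dⁱ)ᵀ Qⁱ Dʲ + δᵢⱼ Rⁱⁱ + δⁱ (Bⁱ)ᵀ Pⁱ Bʲ`. -/
noncomputable def Hmat {N n p : ℕ} {m : Fin N → ℕ}
    (B : (i : Fin N) → Matrix (Fin n) (Fin (m i)) ℝ)
    (D : (i : Fin N) → Matrix (Fin p) (Fin (m i)) ℝ)
    (Q : Fin N → Matrix (Fin p) (Fin p) ℝ)
    (R : (i j : Fin N) → Matrix (Fin (m j)) (Fin (m j)) ℝ)
    (δ : Fin N → ℝ)
    (P : Fin N → Matrix (Fin n) (Fin n) ℝ) :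
    Matrix ((i : Fin N) × Fin (m i)) ((i : Fin N) × Fin (m i)) ℝ :=
  (Matrix.of fun a b =>
    ((D a.1)ᵀ * Q a.1 * D b.1) a.2 b.2 + δ a.1 * ((B a.1)ᵀ * P a.1 * B b.1) a.2 b.2)
  + Matrix.blockDiagonal' (fun i => R i i)

noncomputable def gmat {N n p : ℕ} {m : Fin N → ℕ}
    (A : Matrix (Fin n) (Fin n) ℝ)
    (B : (i : Fin N) → Matrix (Fin n) (Fin (m i)) ℝ)
    (C : Matrix (Fin p) (Fin n) ℝ)
    (D : (i : Fin N) → Matrix (Fin p) (Fin (m i)) ℝ)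
    (Q : Fin N → Matrix (Fin p) (Fin p) ℝ)
    (δ : Fin N → ℝ)
    (P : Fin N → Matrix (Fin n) (Fin n) ℝ) :
    Matrix ((i : Fin N) × Fin (m i)) (Fin n) ℝ :=
  Matrix.of fun a c =>
    (-((D a.1)ᵀ * Q a.1 * C) - δ a.1 • ((B a.1)ᵀ * P a.1 * A)) a.2 c

/-- The blocks of `K = H(P)⁻¹ g(P)`; `⁻¹` is `Matrix.nonsing_inv`, which is `0` when `H(P)` is
singular. -/
noncomputable def Kiter {N n p : ℕ} {m : Fin N → ℕ}
    (A : Matrix (Fin n) (Fin n) ℝ)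
    (B : (i : Fin N) → Matrix (Fin n) (Fin (m i)) ℝ)
    (C : Matrix (Fin p) (Fin n) ℝ)
    (D : (i : Fin N) → Matrix (Fin p) (Fin (m i)) ℝ)
    (Q : Fin N → Matrix (Fin p) (Fin p) ℝ)
    (R : (i j : Fin N) → Matrix (Fin (m j)) (Fin (m j)) ℝ)
    (δ : Fin N → ℝ)
    (P : Fin N → Matrix (Fin n) (Fin n) ℝ) :
    (j : Fin N) → Matrix (Fin (m j)) (Fin n) ℝ :=
  fun j => Matrix.of fun a c =>
    ((Hmat B D Q R δ P)⁻¹ * gmat A B C D Q δ P) ⟨j, a⟩ c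

/-- `Pback s` is `P_{T+1-s}`, counting `s` stages back from `P_{T+1} = 0`. -/
noncomputable def Pback {N n p : ℕ} {m : Fin N → ℕ}
    (A : Matrix (Fin n) (Fin n) ℝ)
    (B : (i : Fin N) → Matrix (Fin n) (Fin (m i)) ℝ)
    (C : Matrix (Fin p) (Fin n) ℝ)
    (D : (i : Fin N) → Matrix (Fin p) (Fin (m i)) ℝ)
    (Q : Fin N → Matrix (Fin p) (Fin p) ℝ)
    (R : (i j : Fin N) → Matrix (Fin (m j)) (Fin (m j)) ℝ)
    (δ : Fin N → ℝ) :
    ℕ → Fin N → Matrix (Fin n) (Fin n) ℝ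
  | 0 => fun _ => 0
  | s + 1 =>
    let Pp := Pback A B C D Q R δ s
    let K := Kiter A B C D Q R δ Pp
    let F := A + ∑ j, B j * K j
    let G := C + ∑ j, D j * K j
    fun i => Gᵀ * Q i * G + δ i • (Fᵀ * Pp i * F) + ∑ j, (K j)ᵀ * R i j * K j

theorem blockDiagonal'_mulVec_uncurry_apply {ι α : Type*} [Fintype ι] [DecidableEq ι]
    [NonUnitalNonAssocSemiring α] {k : ι → Type*} [∀ i, Fintype (k i)]
    (M : (i : ι) → Matrix (k i) (k i) α) (x : (i : ι) → k i → α) (i : ι) (a : k i) :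
    (blockDiagonal' M *ᵥ Sigma.uncurry x) ⟨i, a⟩ = (M i *ᵥ x i) a := by
  simp only [mulVec, dotProduct, Fintype.sum_sigma]
  rw [Finset.sum_eq_single i (fun j _ hj => ?_) (by simp)]
  · simp [blockDiagonal'_apply_eq, Sigma.uncurry]
  · simp [blockDiagonal'_apply_ne _ _ _ (Ne.symm hj)]

theorem existsUnique_backward_recursion {T : ℕ} {U X : Type*}
    (Gain : Fin T → X → U → Prop) (κ : Fin T → X → U) (Upd : Fin T → X → U → X)
    (Inv : Fin (T + 1) → X → Prop) (x₀ : X) (h₀ : Inv (Fin.last T) x₀)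
    (hGain : ∀ t x, Inv t.succ x → ∀ u, Gain t x u ↔ u = κ t x)
    (hUpd : ∀ t x, Inv t.succ x → Inv t.castSucc (Upd t x (κ t x))) :
    ∃! y : (Fin T → U) × (Fin (T + 1) → X), y.2 (Fin.last T) = x₀ ∧
      ∀ t, Gain t (y.2 t.succ) (y.1 t) ∧ y.2 t.castSucc = Upd t (y.2 t.succ) (y.1 t) := by
  let xs : Fin (T + 1) → X := Fin.reverseInduction x₀ fun t x => Upd t x (κ t x)
  have xs_last : xs (Fin.last T) = x₀ := Fin.reverseInduction_last
  have xs_castSucc (t : Fin T) : xs t.castSucc = Upd t (xs t.succ) (κ t (xs t.succ)) :=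
    Fin.reverseInduction_castSucc t
  have inv_xs (s : Fin (T + 1)) : Inv s (xs s) := by
    induction s using Fin.reverseInduction with
    | last => rwa [xs_last]
    | cast t ih => rw [xs_castSucc]; exact hUpd t _ ih
  refine ⟨(fun t => κ t (xs t.succ), xs),
    ⟨xs_last, fun t => ⟨(hGain t _ (inv_xs _) _).mpr rfl, xs_castSucc t⟩⟩, ?_⟩
  rintro ⟨u, x⟩ ⟨hlast, hstep⟩
  dsimp only at hlast hstep
  have hx : x = xs := by
    funext s
    induction s using Fin.reverseInduction with
    | last => rw [hlast, xs_last]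
    | cast t ih =>
      obtain ⟨hgain, hupd⟩ := hstep t
      rw [ih] at hgain hupd
      rw [hupd, xs_castSucc, (hGain t _ (inv_xs _) _).mp hgain]
  subst hx
  exact Prod.ext (funext fun t => (hGain t _ (inv_xs _) _).mp (hstep t).1) rfl

section

variable {N n p : ℕ} {m : Fin N → ℕ} (A : Matrix (Fin n) (Fin n) ℝ)
    (B : (i : Fin N) → Matrix (Fin n) (Fin (m i)) ℝ)
    (C : Matrix (Fin p) (Fin n) ℝ) (D : (i : Fin N) → Matrix (Fin p) (Fin (m i)) ℝ)
    (Q : Fin N → Matrix (Fin p) (Fin p) ℝ)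
    (R : (i j : Fin N) → Matrix (Fin (m j)) (Fin (m j)) ℝ)
    (δ : Fin N → ℝ) (P : Fin N → Matrix (Fin n) (Fin n) ℝ)

theorem Hmat_mulVec_uncurry_apply (x : (j : Fin N) → Fin (m j) → ℝ) (i : Fin N) (a : Fin (m i)) :
    (Hmat B D Q R δ P *ᵥ Sigma.uncurry x) ⟨i, a⟩ =
      (((D i)ᵀ * Q i) *ᵥ ∑ j, D j *ᵥ x j + δ i • (((B i)ᵀ * P i) *ᵥ ∑ j, B j *ᵥ x j)
        + R i i *ᵥ x i) a := by
  rw [Hmat, add_mulVec, Pi.add_apply, blockDiagonal'_mulVec_uncurry_apply, Pi.add_apply]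
  congr 1
  simp only [mulVec_sum, mulVec_mulVec, Pi.add_apply, Pi.smul_apply, Finset.sum_apply, mulVec,
    dotProduct, Fintype.sum_sigma, of_apply, Sigma.uncurry, add_mul, Finset.sum_add_distrib,
    Finset.mul_sum, mul_assoc, smul_eq_mul]

theorem Hmat_mul_uncurry_apply {ι : Type*} (X : (j : Fin N) → Matrix (Fin (m j)) ι ℝ) (i : Fin N)
    (a : Fin (m i)) (c : ι) :
    (Hmat B D Q R δ P * of (Sigma.uncurry X)) ⟨i, a⟩ c =
      ((D i)ᵀ * Q i * ∑ j, D j * X j + δ i • ((B i)ᵀ * P i * ∑ j, B j * X j)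
        + R i i * X i) a c := by
  rw [show (Hmat B D Q R δ P * of (Sigma.uncurry X)) ⟨i, a⟩ c
      = (Hmat B D Q R δ P *ᵥ Sigma.uncurry fun j b => X j b c) ⟨i, a⟩ from rfl,
    Hmat_mulVec_uncurry_apply]
  simp only [Matrix.add_apply, Matrix.smul_apply, Pi.add_apply, Pi.smul_apply, Matrix.mul_sum,
    Matrix.sum_apply, mulVec_sum, Finset.sum_apply, mulVec_mulVec, ← Matrix.mul_assoc]
  rfl

theorem gain_equations_iff_eq_Kiter (hH : IsUnit (Hmat B D Q R δ P).det)
    (K : (j : Fin N) → Matrix (Fin (m j)) (Fin n) ℝ) :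
    (∀ i, δ i • ((B i)ᵀ * P i * (A + ∑ j, B j * K j))
        + (D i)ᵀ * Q i * (C + ∑ j, D j * K j) + R i i * K i = 0)
      ↔ K = Kiter A B C D Q R δ P := by
  set X := of (Sigma.uncurry K)
  have residual (i : Fin N) (a : Fin (m i)) (c : Fin n) :
      (δ i • ((B i)ᵀ * P i * (A + ∑ j, B j * K j))
        + (D i)ᵀ * Q i * (C + ∑ j, D j * K j) + R i i * K i) a c
        = (Hmat B D Q R δ P * X - gmat A B C D Q δ P) ⟨i, a⟩ c := by
    rw [Matrix.sub_apply, Hmat_mul_uncurry_apply]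
    simp only [gmat, of_apply, Matrix.add_apply, Matrix.sub_apply, Matrix.neg_apply,
      Matrix.smul_apply, Matrix.mul_add, smul_eq_mul]
    ring
  calc _ ↔ Hmat B D Q R δ P * X - gmat A B C D Q δ P = 0 := by
        constructor
        · intro h
          ext ⟨i, a⟩ c
          rw [← residual, h i, Matrix.zero_apply, Matrix.zero_apply]
        · intro h i
          ext a c
          rw [residual, h, Matrix.zero_apply, Matrix.zero_apply]
    _ ↔ X = (Hmat B D Q R δ P)⁻¹ * gmat A B C D Q δ P := by
        rw [sub_eq_zero]
        constructor
        · intro h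
          rw [← h, nonsing_inv_mul_cancel_left _ _ hH]
        · intro h
          rw [h, mul_nonsing_inv_cancel_left _ _ hH]
    _ ↔ K = Kiter A B C D Q R δ P :=
        ⟨fun h => funext fun j => ext fun a c => congrFun (congrFun h ⟨j, a⟩) c,
          fun h => by subst h; rfl⟩

noncomputable def Liter (S : Fin N → Fin n → ℝ) (l : Fin N → Fin p → ℝ) :
    (j : Fin N) → Fin (m j) → ℝ :=
  Sigma.curry ((Hmat B D Q R δ P)⁻¹ *ᵥ
    Sigma.uncurry fun i => ((D i)ᵀ * Q i) *ᵥ l i - δ i • (B i)ᵀ *ᵥ S i)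

theorem offset_equations_iff_eq_Liter (hH : IsUnit (Hmat B D Q R δ P).det) (S : Fin N → Fin n → ℝ)
    (l : Fin N → Fin p → ℝ) (L : (j : Fin N) → Fin (m j) → ℝ) :
    (∀ i, δ i • ((B i)ᵀ *ᵥ (P i *ᵥ ∑ j, B j *ᵥ L j + S i)) + R i i *ᵥ L i
        + ((D i)ᵀ * Q i) *ᵥ (∑ j, D j *ᵥ L j - l i) = 0)
      ↔ L = Liter B D Q R δ P S l := by
  set r := Sigma.uncurry fun i => ((D i)ᵀ * Q i) *ᵥ l i - δ i • (B i)ᵀ *ᵥ S i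
  have residual (i : Fin N) (a : Fin (m i)) :
      (δ i • ((B i)ᵀ *ᵥ (P i *ᵥ ∑ j, B j *ᵥ L j + S i)) + R i i *ᵥ L i
        + ((D i)ᵀ * Q i) *ᵥ (∑ j, D j *ᵥ L j - l i)) a
        = (Hmat B D Q R δ P *ᵥ Sigma.uncurry L - r) ⟨i, a⟩ := by
    rw [Pi.sub_apply, Hmat_mulVec_uncurry_apply]
    simp only [r, Sigma.uncurry, mulVec_add, mulVec_sub, mulVec_mulVec, Pi.add_apply,
      Pi.sub_apply, Pi.smul_apply, smul_eq_mul]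
    ring
  calc _ ↔ Hmat B D Q R δ P *ᵥ Sigma.uncurry L - r = 0 := by
        constructor
        · intro h
          funext ⟨i, a⟩
          rw [← residual, h i, Pi.zero_apply, Pi.zero_apply]
        · intro h i
          funext a
          rw [residual, h, Pi.zero_apply, Pi.zero_apply]
    _ ↔ Sigma.uncurry L = (Hmat B D Q R δ P)⁻¹ *ᵥ r := by
        rw [sub_eq_zero]
        constructor
        · intro h
          rw [← h, mulVec_mulVec, nonsing_inv_mul _ hH, one_mulVec]
        · intro h
          rw [h, mulVec_mulVec, mul_nonsing_inv _ hH, one_mulVec]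
    _ ↔ L = Liter B D Q R δ P S l := by
        rw [Liter]
        exact ⟨fun h => by rw [← h, Sigma.curry_uncurry], fun h => by rw [h, Sigma.uncurry_curry]⟩

/-- `(Pⁱ, Sⁱ, wⁱ)ᵢ`, the coefficients of the value functions `½ xᵀ Pⁱ x + (Sⁱ)ᵀ x + wⁱ`. -/
abbrev ValueCoeffs (N n : ℕ) :=
  (Fin N → Matrix (Fin n) (Fin n) ℝ) × (Fin N → Fin n → ℝ) × (Fin N → ℝ)

abbrev AffineFeedback {N : ℕ} (n : ℕ) (m : Fin N → ℕ) :=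
  ((j : Fin N) → Matrix (Fin (m j)) (Fin n) ℝ) × ((j : Fin N) → Fin (m j) → ℝ)

def RiccatiGain (l : Fin N → Fin p → ℝ) (V : ValueCoeffs N n) (u : AffineFeedback n m) : Prop :=
  (∀ i, δ i • ((B i)ᵀ * V.1 i * (A + ∑ j, B j * u.1 j))
      + (D i)ᵀ * Q i * (C + ∑ j, D j * u.1 j) + R i i * u.1 i = 0) ∧
  (∀ i, δ i • ((B i)ᵀ.mulVec ((V.1 i).mulVec (∑ j, (B j).mulVec (u.2 j)) + V.2.1 i))
      + (R i i).mulVec (u.2 i)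
      + ((D i)ᵀ * Q i).mulVec ((∑ j, (D j).mulVec (u.2 j)) - l i) = 0)

noncomputable def riccatiUpdate (l : Fin N → Fin p → ℝ) (V : ValueCoeffs N n)
    (u : AffineFeedback n m) : ValueCoeffs N n :=
  (fun i => (C + ∑ j, D j * u.1 j)ᵀ * Q i * (C + ∑ j, D j * u.1 j)
      + δ i • ((A + ∑ j, B j * u.1 j)ᵀ * V.1 i * (A + ∑ j, B j * u.1 j))
      + ∑ j, (u.1 j)ᵀ * R i j * u.1 j,
    fun i => ((C + ∑ j, D j * u.1 j)ᵀ * Q i).mulVec ((∑ j, (D j).mulVec (u.2 j)) - l i)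
      + δ i • (((A + ∑ j, B j * u.1 j)ᵀ * V.1 i).mulVec (∑ j, (B j).mulVec (u.2 j)))
      + δ i • ((A + ∑ j, B j * u.1 j)ᵀ.mulVec (V.2.1 i))
      + ∑ j, ((u.1 j)ᵀ * R i j).mulVec (u.2 j),
    fun i => (1 / 2) * (((∑ j, (D j).mulVec (u.2 j)) - l i) ⬝ᵥ
          (Q i).mulVec ((∑ j, (D j).mulVec (u.2 j)) - l i))
      + δ i * ((1 / 2) * ((∑ j, (B j).mulVec (u.2 j)) ⬝ᵥ
          (V.1 i).mulVec (∑ j, (B j).mulVec (u.2 j))))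
      + δ i * ((∑ j, (B j).mulVec (u.2 j)) ⬝ᵥ V.2.1 i)
      + δ i * V.2.2 i
      + (1 / 2) * ∑ j, (u.2 j ⬝ᵥ (R i j).mulVec (u.2 j)))

theorem riccatiGain_iff (l : Fin N → Fin p → ℝ) (V : ValueCoeffs N n)
    (hH : IsUnit (Hmat B D Q R δ V.1).det) (u : AffineFeedback n m) :
    RiccatiGain A B C D Q R δ l V u
      ↔ u = (Kiter A B C D Q R δ V.1, Liter B D Q R δ V.1 V.2.1 l) := by
  rw [RiccatiGain, Prod.ext_iff]
  exact and_congr (gain_equations_iff_eq_Kiter A B C D Q R δ V.1 hH u.1)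
    (offset_equations_iff_eq_Liter B D Q R δ V.1 hH V.2.1 l u.2)

theorem Pback_succ_eq_riccatiUpdate_fst (l : Fin N → Fin p → ℝ) (s : ℕ) (V : ValueCoeffs N n)
    (hV : V.1 = Pback A B C D Q R δ s) (L : (j : Fin N) → Fin (m j) → ℝ) :
    Pback A B C D Q R δ (s + 1)
      = (riccatiUpdate A B C D Q R δ l V (Kiter A B C D Q R δ V.1, L)).1 := by
  obtain ⟨P, S, w⟩ := V
  dsimp only at hV
  subst hV
  rfl

def solutionEquiv (N n T : ℕ) (m : Fin N → ℕ) :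
    (((i : Fin N) → Fin T → Matrix (Fin (m i)) (Fin n) ℝ) ×
      ((i : Fin N) → Fin T → (Fin (m i) → ℝ)) ×
      (Fin N → Fin (T + 1) → Matrix (Fin n) (Fin n) ℝ) ×
      (Fin N → Fin (T + 1) → (Fin n → ℝ)) ×
      (Fin N → Fin (T + 1) → ℝ))
      ≃ (Fin T → AffineFeedback n m) × (Fin (T + 1) → ValueCoeffs N n) where
  toFun s := (fun t => (fun i => s.1 i t, fun i => s.2.1 i t),
    fun r => (fun i => s.2.2.1 i r, fun i => s.2.2.2.1 i r, fun i => s.2.2.2.2 i r))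
  invFun y := (fun i t => (y.1 t).1 i, fun i t => (y.1 t).2 i,
    fun i r => (y.2 r).1 i, fun i r => (y.2 r).2.1 i, fun i r => (y.2 r).2.2 i)
  left_inv _ := rfl
  right_inv _ := rfl

end

/-- Stage `t ∈ {1,…,T}` is encoded by `t : Fin T`; `P, S, w` are indexed by `Fin (T+1)`, with
`t.castSucc` playing the role of `t` and `t.succ` that of `t+1`. -/
theorem stmt0_general {N n p T : ℕ} {m : Fin N → ℕ}
    (A : Matrix (Fin n) (Fin n) ℝ)
    (B : (i : Fin N) → Matrix (Fin n) (Fin (m i)) ℝ)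
    (C : Matrix (Fin p) (Fin n) ℝ)
    (D : (i : Fin N) → Matrix (Fin p) (Fin (m i)) ℝ)
    (Q : Fin N → Matrix (Fin p) (Fin p) ℝ)
    (R : (i j : Fin N) → Matrix (Fin (m j)) (Fin (m j)) ℝ)
    (δ : Fin N → ℝ)
    (l : Fin N → Fin T → Fin p → ℝ)
    (hInv : ∀ s < T, IsUnit (Hmat B D Q R δ (Pback A B C D Q R δ s)).det) :
    ∃! sol : ((i : Fin N) → Fin T → Matrix (Fin (m i)) (Fin n) ℝ) ×
             ((i : Fin N) → Fin T → (Fin (m i) → ℝ)) ×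
             (Fin N → Fin (T + 1) → Matrix (Fin n) (Fin n) ℝ) ×
             (Fin N → Fin (T + 1) → (Fin n → ℝ)) ×
             (Fin N → Fin (T + 1) → ℝ),
      -- terminal conditions P_{T+1} = 0, S_{T+1} = 0, w_{T+1} = 0
      (∀ i, sol.2.2.1 i (Fin.last T) = 0) ∧
      (∀ i, sol.2.2.2.1 i (Fin.last T) = 0) ∧
      (∀ i, sol.2.2.2.2 i (Fin.last T) = 0) ∧
      -- (i)  δⁱ (Bⁱ)ᵀ P_{t+1}ⁱ F_t + (Dⁱ)ᵀ Qⁱ G_t + Rⁱⁱ K_tⁱ = 0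
      (∀ (i : Fin N) (t : Fin T),
        δ i • ((B i)ᵀ * sol.2.2.1 i t.succ * (A + ∑ j, B j * sol.1 j t))
          + (D i)ᵀ * Q i * (C + ∑ j, D j * sol.1 j t)
          + R i i * sol.1 i t = 0) ∧
      -- (ii)  δⁱ (Bⁱ)ᵀ (P_{t+1}ⁱ I_t + S_{t+1}ⁱ) + Rⁱⁱ L_tⁱ + (Dⁱ)ᵀ Qⁱ M_tⁱ = 0
      (∀ (i : Fin N) (t : Fin T),
        δ i • ((B i)ᵀ.mulVec ((sol.2.2.1 i t.succ).mulVec (∑ j, (B j).mulVec (sol.2.1 j t))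
            + sol.2.2.2.1 i t.succ))
          + (R i i).mulVec (sol.2.1 i t)
          + ((D i)ᵀ * Q i).mulVec ((∑ j, (D j).mulVec (sol.2.1 j t)) - l i t) = 0) ∧
      -- (iii)  P_tⁱ = G_tᵀ Qⁱ G_t + δⁱ F_tᵀ P_{t+1}ⁱ F_t + Σⱼ (K_tʲ)ᵀ Rⁱʲ K_tʲ
      (∀ (i : Fin N) (t : Fin T),
        sol.2.2.1 i t.castSucc =
          (C + ∑ j, D j * sol.1 j t)ᵀ * Q i * (C + ∑ j, D j * sol.1 j t)
          + δ i • ((A + ∑ j, B j * sol.1 j t)ᵀ * sol.2.2.1 i t.succ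
              * (A + ∑ j, B j * sol.1 j t))
          + ∑ j, (sol.1 j t)ᵀ * R i j * sol.1 j t) ∧
      -- (iv)  S_tⁱ = G_tᵀ Qⁱ M_tⁱ + δⁱ F_tᵀ P_{t+1}ⁱ I_t + δⁱ F_tᵀ S_{t+1}ⁱ + Σⱼ (K_tʲ)ᵀ Rⁱʲ L_tʲ
      (∀ (i : Fin N) (t : Fin T),
        sol.2.2.2.1 i t.castSucc =
          ((C + ∑ j, D j * sol.1 j t)ᵀ * Q i).mulVec
            ((∑ j, (D j).mulVec (sol.2.1 j t)) - l i t)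
          + δ i • (((A + ∑ j, B j * sol.1 j t)ᵀ * sol.2.2.1 i t.succ).mulVec
              (∑ j, (B j).mulVec (sol.2.1 j t)))
          + δ i • ((A + ∑ j, B j * sol.1 j t)ᵀ.mulVec (sol.2.2.2.1 i t.succ))
          + ∑ j, ((sol.1 j t)ᵀ * R i j).mulVec (sol.2.1 j t)) ∧
      -- (v)  w_tⁱ = ½ M_tⁱᵀ Qⁱ M_tⁱ + ½ δⁱ I_tᵀ P_{t+1}ⁱ I_t + δⁱ I_tᵀ S_{t+1}ⁱ + δⁱ w_{t+1}ⁱ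
      --       + ½ Σⱼ (L_tʲ)ᵀ Rⁱʲ L_tʲ
      (∀ (i : Fin N) (t : Fin T),
        sol.2.2.2.2 i t.castSucc =
          (1 / 2) * (((∑ j, (D j).mulVec (sol.2.1 j t)) - l i t) ⬝ᵥ
              (Q i).mulVec ((∑ j, (D j).mulVec (sol.2.1 j t)) - l i t))
          + δ i * ((1 / 2) * ((∑ j, (B j).mulVec (sol.2.1 j t)) ⬝ᵥ
              (sol.2.2.1 i t.succ).mulVec (∑ j, (B j).mulVec (sol.2.1 j t))))
          + δ i * ((∑ j, (B j).mulVec (sol.2.1 j t)) ⬝ᵥ sol.2.2.2.1 i t.succ)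
          + δ i * sol.2.2.2.2 i t.succ
          + (1 / 2) * ∑ j, (sol.2.1 j t ⬝ᵥ (R i j).mulVec (sol.2.1 j t))) := by
  have hback := existsUnique_backward_recursion
    (fun t => RiccatiGain A B C D Q R δ (fun i => l i t))
    (fun t V => (Kiter A B C D Q R δ V.1, Liter B D Q R δ V.1 V.2.1 fun i => l i t))
    (fun t => riccatiUpdate A B C D Q R δ (fun i => l i t))
    (fun s V => V.1 = Pback A B C D Q R δ (T - s)) 0
    (by rw [Fin.val_last, Nat.sub_self]; rfl)
    (fun t V hV =>
      riccatiGain_iff A B C D Q R δ _ V (hV ▸ hInv _ (by simp only [Fin.val_succ]; omega)))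
    (fun t V hV => by
      rw [show T - (t.castSucc : ℕ) = T - t.succ + 1 by simp; omega]
      exact (Pback_succ_eq_riccatiUpdate_fst A B C D Q R δ _ _ V hV _).symm)
  rw [(solutionEquiv N n T m).existsUnique_congr_left]
  refine (existsUnique_congr fun y => ?_).mpr hback
  constructor
  · rintro ⟨hP, hS, hw, hK, hL, hPt, hSt, hwt⟩
    exact ⟨Prod.ext (funext hP) (Prod.ext (funext hS) (funext hw)),
      fun t => ⟨⟨fun i => hK i t, fun i => hL i t⟩,
        Prod.ext (funext (hPt · t)) (Prod.ext (funext (hSt · t)) (funext (hwt · t)))⟩⟩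
  · rintro ⟨h0, hstep⟩
    simp only [Prod.ext_iff] at h0 hstep
    exact ⟨congrFun h0.1, congrFun h0.2.1, congrFun h0.2.2, fun i t => (hstep t).1.1 i,
      fun i t => (hstep t).1.2 i, fun i t => congrFun (hstep t).2.1 i,
      fun i t => congrFun (hstep t).2.2.1 i, fun i t => congrFun (hstep t).2.2.2 i⟩

/-- Proposition 1: if the backward sequence `P_{T+1}, …, P_2` is well defined,
i.e. `H(P_{t+1})` is invertible at every stage, then the coupled generalized discrete Riccati
difference system (i)–(v) with terminal conditions `P_{T+1}=0, S_{T+1}=0, w_{T+1}=0`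
admits exactly one solution `{K_tⁱ, L_tⁱ, P_tⁱ, S_tⁱ, w_tⁱ}`.
(Stage `t ∈ {1,…,T}` is encoded by `t : Fin T`; the matrices `P, S, w` are indexed by
`Fin (T+1)` with `t.castSucc` playing the role of `t` and `t.succ` that of `t+1`.) -/
theorem stmt0 {N n p T : ℕ} {m : Fin N → ℕ}
    (hN : 0 < N) (hn : 0 < n) (hp : 0 < p) (hm : ∀ i, 0 < m i) (hT : 0 < T)
    (A : Matrix (Fin n) (Fin n) ℝ)
    (B : (i : Fin N) → Matrix (Fin n) (Fin (m i)) ℝ)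
    (C : Matrix (Fin p) (Fin n) ℝ)
    (D : (i : Fin N) → Matrix (Fin p) (Fin (m i)) ℝ)
    (Q : Fin N → Matrix (Fin p) (Fin p) ℝ)
    (R : (i j : Fin N) → Matrix (Fin (m j)) (Fin (m j)) ℝ)
    (δ : Fin N → ℝ)
    (l : Fin N → Fin T → Fin p → ℝ)
    (hQ : ∀ i, (Q i).PosSemidef)
    (hR : ∀ i j, (R i j).IsSymm)
    (hRii : ∀ i, (R i i).PosDef)
    (hδ : ∀ i, 0 < δ i ∧ δ i ≤ 1)
    (hInv : ∀ s < T, IsUnit (Hmat B D Q R δ (Pback A B C D Q R δ s)).det) :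
    ∃! sol : ((i : Fin N) → Fin T → Matrix (Fin (m i)) (Fin n) ℝ) ×
             ((i : Fin N) → Fin T → (Fin (m i) → ℝ)) ×
             (Fin N → Fin (T + 1) → Matrix (Fin n) (Fin n) ℝ) ×
             (Fin N → Fin (T + 1) → (Fin n → ℝ)) ×
             (Fin N → Fin (T + 1) → ℝ),
      -- terminal conditions P_{T+1} = 0, S_{T+1} = 0, w_{T+1} = 0
      (∀ i, sol.2.2.1 i (Fin.last T) = 0) ∧
      (∀ i, sol.2.2.2.1 i (Fin.last T) = 0) ∧
      (∀ i, sol.2.2.2.2 i (Fin.last T) = 0) ∧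
      -- (i)  δⁱ (Bⁱ)ᵀ P_{t+1}ⁱ F_t + (Dⁱ)ᵀ Qⁱ G_t + Rⁱⁱ K_tⁱ = 0
      (∀ (i : Fin N) (t : Fin T),
        δ i • ((B i)ᵀ * sol.2.2.1 i t.succ * (A + ∑ j, B j * sol.1 j t))
          + (D i)ᵀ * Q i * (C + ∑ j, D j * sol.1 j t)
          + R i i * sol.1 i t = 0) ∧
      -- (ii)  δⁱ (Bⁱ)ᵀ (P_{t+1}ⁱ I_t + S_{t+1}ⁱ) + Rⁱⁱ L_tⁱ + (Dⁱ)ᵀ Qⁱ M_tⁱ = 0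
      (∀ (i : Fin N) (t : Fin T),
        δ i • ((B i)ᵀ.mulVec ((sol.2.2.1 i t.succ).mulVec (∑ j, (B j).mulVec (sol.2.1 j t))
            + sol.2.2.2.1 i t.succ))
          + (R i i).mulVec (sol.2.1 i t)
          + ((D i)ᵀ * Q i).mulVec ((∑ j, (D j).mulVec (sol.2.1 j t)) - l i t) = 0) ∧
      -- (iii)  P_tⁱ = G_tᵀ Qⁱ G_t + δⁱ F_tᵀ P_{t+1}ⁱ F_t + Σⱼ (K_tʲ)ᵀ Rⁱʲ K_tʲ
      (∀ (i : Fin N) (t : Fin T),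
        sol.2.2.1 i t.castSucc =
          (C + ∑ j, D j * sol.1 j t)ᵀ * Q i * (C + ∑ j, D j * sol.1 j t)
          + δ i • ((A + ∑ j, B j * sol.1 j t)ᵀ * sol.2.2.1 i t.succ
              * (A + ∑ j, B j * sol.1 j t))
          + ∑ j, (sol.1 j t)ᵀ * R i j * sol.1 j t) ∧
      -- (iv)  S_tⁱ = G_tᵀ Qⁱ M_tⁱ + δⁱ F_tᵀ P_{t+1}ⁱ I_t + δⁱ F_tᵀ S_{t+1}ⁱ + Σⱼ (K_tʲ)ᵀ Rⁱʲ L_tʲ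
      (∀ (i : Fin N) (t : Fin T),
        sol.2.2.2.1 i t.castSucc =
          ((C + ∑ j, D j * sol.1 j t)ᵀ * Q i).mulVec
            ((∑ j, (D j).mulVec (sol.2.1 j t)) - l i t)
          + δ i • (((A + ∑ j, B j * sol.1 j t)ᵀ * sol.2.2.1 i t.succ).mulVec
              (∑ j, (B j).mulVec (sol.2.1 j t)))
          + δ i • ((A + ∑ j, B j * sol.1 j t)ᵀ.mulVec (sol.2.2.2.1 i t.succ))
          + ∑ j, ((sol.1 j t)ᵀ * R i j).mulVec (sol.2.1 j t)) ∧
      -- (v)  w_tⁱ = ½ M_tⁱᵀ Qⁱ M_tⁱ + ½ δⁱ I_tᵀ P_{t+1}ⁱ I_t + δⁱ I_tᵀ S_{t+1}ⁱ + δⁱ w_{t+1}ⁱ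
      --       + ½ Σⱼ (L_tʲ)ᵀ Rⁱʲ L_tʲ
      (∀ (i : Fin N) (t : Fin T),
        sol.2.2.2.2 i t.castSucc =
          (1 / 2) * (((∑ j, (D j).mulVec (sol.2.1 j t)) - l i t) ⬝ᵥ
              (Q i).mulVec ((∑ j, (D j).mulVec (sol.2.1 j t)) - l i t))
          + δ i * ((1 / 2) * ((∑ j, (B j).mulVec (sol.2.1 j t)) ⬝ᵥ
              (sol.2.2.1 i t.succ).mulVec (∑ j, (B j).mulVec (sol.2.1 j t))))
          + δ i * ((∑ j, (B j).mulVec (sol.2.1 j t)) ⬝ᵥ sol.2.2.2.1 i t.succ)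
          + δ i * sol.2.2.2.2 i t.succ
          + (1 / 2) * ∑ j, (sol.2.1 j t ⬝ᵥ (R i j).mulVec (sol.2.1 j t))) :=
  stmt0_general A B C D Q R δ l hInv
end

section
/- Let n, p ≥ 1, F, F̃ ∈ ℝ^{n×n}, G, G̃ ∈ ℝ^{p×n}, and Q ∈ ℝ^{p×p}. Set λ := ‖F‖₂ and suppose ‖F̃ − F‖₂ ≤ η and ‖G̃ − G‖₂ ≤ μ with λ + η < 1, and let M ∈ ℝ satisfy (t−1)(λ+η)^{t−2} ≤ M for every integer t ≥ 2. Define g := (‖G‖₂ + μ) M η + μ. Then for every integer t ≥ 1: ‖(G̃ F̃^{t−1})^⊤ Q (G̃ F̃^{t−1}) − (G F^{t−1})^⊤ Q (G F^{t−1})‖₂ ≤ 2 g ‖Q‖₂ (‖G‖₂ + μ). -/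
/-!
Write `A = G̃ F̃^k` and `B = G F^k` with `k = t - 1`. Since
`Aᵀ Q A - Bᵀ Q B = Aᵀ Q (A - B) + (A - B)ᵀ Q B`, it suffices to show `‖A‖, ‖B‖ ≤ ‖G‖₂ + μ`,
which holds because `‖F‖₂, ‖F̃‖₂ ≤ λ + η < 1`, and `‖A - B‖ ≤ g`. For the latter,
`A - B = G̃ (F̃^k - F^k) + (G̃ - G) F^k`, and peeling off one factor at a time gives
`‖F̃^{j+1} - F^{j+1}‖ ≤ (j + 1) η (λ + η)^j ≤ M η`.
-/

open Matrix

/-- The spectral (operator 2-)norm of a real matrix. -/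
noncomputable def sn {r c : ℕ} (A : Matrix (Fin r) (Fin c) ℝ) : ℝ :=
  ‖LinearMap.toContinuousLinearMap (Matrix.toEuclideanLin A)‖

open scoped Matrix.Norms.L2Operator

section NormedRing

variable {R : Type*} [NormedRing R]

theorem norm_pow_succ_sub_pow_succ_le {a b : R} {η : ℝ} (h : ‖b - a‖ ≤ η) (k : ℕ) :
    ‖b ^ (k + 1) - a ^ (k + 1)‖ ≤ (k + 1) * η * (‖a‖ + η) ^ k := by
  have hη : 0 ≤ η := (norm_nonneg _).trans h
  have hb : ‖b‖ ≤ ‖a‖ + η := (norm_le_norm_add_norm_sub' b a).trans (by linarith)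
  induction k with
  | zero => simpa using h
  | succ k ih =>
    have hbk : ‖b ^ (k + 1)‖ ≤ (‖a‖ + η) ^ (k + 1) :=
      (norm_pow_le' b k.succ_pos).trans (pow_le_pow_left₀ (norm_nonneg b) hb _)
    have hsplit : b ^ (k + 2) - a ^ (k + 2)
        = (b - a) * b ^ (k + 1) + a * (b ^ (k + 1) - a ^ (k + 1)) := by
      rw [pow_succ' b, pow_succ' a, sub_mul, mul_sub]
      abel
    calc ‖b ^ (k + 2) - a ^ (k + 2)‖
        ≤ ‖b - a‖ * ‖b ^ (k + 1)‖ + ‖a‖ * ‖b ^ (k + 1) - a ^ (k + 1)‖ := by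
          rw [hsplit]
          exact norm_add_le_of_le (norm_mul_le _ _) (norm_mul_le _ _)
      _ ≤ η * (‖a‖ + η) ^ (k + 1) + (‖a‖ + η) * ((k + 1) * η * (‖a‖ + η) ^ k) := by
          gcongr
          linarith
      _ = ((k + 1 : ℕ) + 1) * η * (‖a‖ + η) ^ (k + 1) := by push_cast; ring

theorem norm_pow_sub_pow_le {a b : R} {η M : ℝ} (h : ‖b - a‖ ≤ η)
    (hM : ∀ j : ℕ, (j + 1) * (‖a‖ + η) ^ j ≤ M) (k : ℕ) : ‖b ^ k - a ^ k‖ ≤ M * η := by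
  have hη : 0 ≤ η := (norm_nonneg _).trans h
  cases k with
  | zero =>
    have hM1 : 1 ≤ M := by simpa using hM 0
    simpa using mul_nonneg (zero_le_one.trans hM1) hη
  | succ j =>
    calc ‖b ^ (j + 1) - a ^ (j + 1)‖ ≤ (j + 1) * η * (‖a‖ + η) ^ j :=
          norm_pow_succ_sub_pow_succ_le h j
      _ = (j + 1) * (‖a‖ + η) ^ j * η := by ring
      _ ≤ M * η := by gcongr; exact hM j

end NormedRing

namespace Matrix

variable {m n 𝕜 : Type*} [Fintype m] [Fintype n] [DecidableEq n]

theorem l2_opNorm_mul_pow_le [RCLike 𝕜] (A : Matrix m n 𝕜) (X : Matrix n n 𝕜) (k : ℕ) :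
    ‖A * X ^ k‖ ≤ ‖A‖ * ‖X‖ ^ k := by
  induction k with
  | zero => simp
  | succ k ih =>
    calc ‖A * X ^ (k + 1)‖ ≤ ‖A * X ^ k‖ * ‖X‖ := by
          rw [pow_succ, ← Matrix.mul_assoc]; exact l2_opNorm_mul _ _
      _ ≤ ‖A‖ * ‖X‖ ^ k * ‖X‖ := by gcongr
      _ = ‖A‖ * ‖X‖ ^ (k + 1) := by ring

theorem l2_opNorm_mul_pow_le_of_le_one [RCLike 𝕜] {A : Matrix m n 𝕜} {X : Matrix n n 𝕜} {c : ℝ}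
    (hA : ‖A‖ ≤ c) (hX : ‖X‖ ≤ 1) (k : ℕ) : ‖A * X ^ k‖ ≤ c :=
  calc ‖A * X ^ k‖ ≤ ‖A‖ * ‖X‖ ^ k := l2_opNorm_mul_pow_le A X k
    _ ≤ ‖A‖ := mul_le_of_le_one_right (norm_nonneg A) (pow_le_one₀ (norm_nonneg X) hX)
    _ ≤ c := hA

theorem l2_opNorm_transpose [DecidableEq m] (A : Matrix m n ℝ) : ‖Aᵀ‖ = ‖A‖ := by
  rw [← conjTranspose_eq_transpose_of_trivial, l2_opNorm_conjTranspose]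

theorem l2_opNorm_transpose_mul_mul_sub_le [DecidableEq m] (A B : Matrix m n ℝ)
    (Q : Matrix m m ℝ) {c d : ℝ} (hA : ‖A‖ ≤ c) (hB : ‖B‖ ≤ c) (hAB : ‖A - B‖ ≤ d) :
    ‖Aᵀ * Q * A - Bᵀ * Q * B‖ ≤ 2 * d * ‖Q‖ * c := by
  have hsplit : Aᵀ * Q * A - Bᵀ * Q * B = Aᵀ * Q * (A - B) + (A - B)ᵀ * Q * B := by
    rw [transpose_sub, Matrix.mul_sub, Matrix.sub_mul, Matrix.sub_mul]
    abel
  have hsandwich (X Y : Matrix m n ℝ) : ‖Xᵀ * Q * Y‖ ≤ ‖X‖ * ‖Q‖ * ‖Y‖ := by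
    grw [l2_opNorm_mul, l2_opNorm_mul, l2_opNorm_transpose]
  have hc : 0 ≤ c := (norm_nonneg A).trans hA
  have hd : 0 ≤ d := (norm_nonneg _).trans hAB
  calc ‖Aᵀ * Q * A - Bᵀ * Q * B‖ ≤ ‖A‖ * ‖Q‖ * ‖A - B‖ + ‖A - B‖ * ‖Q‖ * ‖B‖ := by
        rw [hsplit]; exact norm_add_le_of_le (hsandwich _ _) (hsandwich _ _)
    _ ≤ c * ‖Q‖ * d + d * ‖Q‖ * c := by gcongr
    _ = 2 * d * ‖Q‖ * c := by ring

end Matrix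

theorem sn_eq_norm {r c : ℕ} (A : Matrix (Fin r) (Fin c) ℝ) : sn A = ‖A‖ := rfl

theorem stmt12_general {n p : ℕ}
    (F Ftil : Matrix (Fin n) (Fin n) ℝ)
    (G Gtil : Matrix (Fin p) (Fin n) ℝ)
    (Q : Matrix (Fin p) (Fin p) ℝ)
    (η μ : ℝ) (hη : 0 ≤ η) (hμ : 0 ≤ μ)
    (hFF : sn (Ftil - F) ≤ η) (hGG : sn (Gtil - G) ≤ μ)
    (hlt : sn F + η < 1)
    (M : ℝ) (hM : ∀ t : ℕ, 2 ≤ t → ((t : ℝ) - 1) * (sn F + η) ^ (t - 2) ≤ M) :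
    ∀ t : ℕ, 1 ≤ t →
      sn ((Gtil * Ftil ^ (t - 1))ᵀ * Q * (Gtil * Ftil ^ (t - 1))
          - (G * F ^ (t - 1))ᵀ * Q * (G * F ^ (t - 1)))
        ≤ 2 * ((sn G + μ) * M * η + μ) * sn Q * (sn G + μ) := by
  simp only [sn_eq_norm] at hFF hGG hlt hM ⊢
  intro t ht
  obtain ⟨k, rfl⟩ : ∃ k, t = k + 1 := ⟨t - 1, by omega⟩
  rw [Nat.add_sub_cancel]
  have hF : ‖F‖ ≤ 1 := by linarith
  have hFtil : ‖Ftil‖ ≤ 1 := (norm_le_norm_add_norm_sub' Ftil F).trans (by linarith)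
  have hGtil : ‖Gtil‖ ≤ ‖G‖ + μ := (norm_le_norm_add_norm_sub' Gtil G).trans (by linarith)
  have hM' (j : ℕ) : (j + 1) * (‖F‖ + η) ^ j ≤ M := by
    have h := hM (j + 2) (by omega)
    rw [Nat.add_sub_cancel] at h
    push_cast at h
    linarith
  apply l2_opNorm_transpose_mul_mul_sub_le
  · exact l2_opNorm_mul_pow_le_of_le_one hGtil hFtil k
  · exact l2_opNorm_mul_pow_le_of_le_one (by linarith) hF k
  · calc ‖Gtil * Ftil ^ k - G * F ^ k‖ = ‖Gtil * (Ftil ^ k - F ^ k) + (Gtil - G) * F ^ k‖ := by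
          rw [Matrix.mul_sub, Matrix.sub_mul]; abel_nf
      _ ≤ ‖Gtil‖ * ‖Ftil ^ k - F ^ k‖ + μ :=
          norm_add_le_of_le (l2_opNorm_mul _ _) (l2_opNorm_mul_pow_le_of_le_one hGG hF k)
      _ ≤ (‖G‖ + μ) * (M * η) + μ := by gcongr; exact norm_pow_sub_pow_le hFF hM' k
      _ = (‖G‖ + μ) * M * η + μ := by ring

/-- output-cost perturbation bound `G_{i1}(ε)`: under the hypotheses of the
output-trajectory bound, with `g = (‖G‖₂ + μ) M η + μ`, for every `t ≥ 1`,
`‖(G̃ F̃^{t−1})ᵀ Q (G̃ F̃^{t−1}) − (G F^{t−1})ᵀ Q (G F^{t−1})‖₂ ≤ 2 g ‖Q‖₂ (‖G‖₂ + μ)`. -/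
theorem stmt12 {n p : ℕ} (hn : 0 < n) (hp : 0 < p)
    (F Ftil : Matrix (Fin n) (Fin n) ℝ)
    (G Gtil : Matrix (Fin p) (Fin n) ℝ)
    (Q : Matrix (Fin p) (Fin p) ℝ)
    (η μ : ℝ) (hη : 0 ≤ η) (hμ : 0 ≤ μ)
    (hFF : sn (Ftil - F) ≤ η) (hGG : sn (Gtil - G) ≤ μ)
    (hlt : sn F + η < 1)
    (M : ℝ) (hM : ∀ t : ℕ, 2 ≤ t → ((t : ℝ) - 1) * (sn F + η) ^ (t - 2) ≤ M) :
    ∀ t : ℕ, 1 ≤ t →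
      sn ((Gtil * Ftil ^ (t - 1))ᵀ * Q * (Gtil * Ftil ^ (t - 1))
          - (G * F ^ (t - 1))ᵀ * Q * (G * F ^ (t - 1)))
        ≤ 2 * ((sn G + μ) * M * η + μ) * sn Q * (sn G + μ) :=
  stmt12_general F Ftil G Gtil Q η μ hη hμ hFF hGG hlt M hM
end
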